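/- arXiv:2310.00674 — 3 statements merged into one kernel-verified Lean document; each statement's English description precedes it below -/
import Mathlib

section
/- Let A > 0 and α < 0 satisfy −A < α. Then there exists θ ∈ (0,1), depending only on α and A, such that for every positive integer n and every finite sequence of real numbers a₁, …, aₙ with aᵢ ≥ −A for all 1 ≤ i ≤ n, if ∑_{i=1}^{n} aᵢ < α·n, then the number of indices k ∈ {1, …, n} with the property that ∑_{i=k−j+1}^{k} aᵢ ≤ (α/2)·j for every 1 ≤ j ≤ k is at least θ·n. -/
/-!
Put `S k = ∑_{i ≤ k} aᵢ - (α/2) k`. The index `k` is an `(α/2)`-hyperbolic time exactly when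
`S k ≤ S m` for all `m < k`, i.e. when `S` attains a (weak) record minimum at `k`. Since
`aᵢ ≥ -A`, each step of `S` drops by at most `L = A + α/2 > 0`, and `S` can only fall below its
previous minimum at a record time, so `S n ≥ -L · #records`. As `S n < (α/2) n`, there are more
than `θ n` records, with `θ = (-α/2) / L`, and `θ < 1` because `-α < A`.
-/

open Finset

section RecordMinima

variable {α : Type*} [LinearOrder α]

def recordMinTimes (S : ℕ → α) (n : ℕ) : Finset ℕ :=
  (Icc 1 n).filter fun k => ∀ m < k, S k ≤ S m

theorem recordMinTimes_mono (S : ℕ → α) : Monotone (recordMinTimes S) := fun _ _ h =>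
  filter_subset_filter _ (Icc_subset_Icc_right h)

theorem recordMinTimes_succ (S : ℕ → α) (n : ℕ) :
    recordMinTimes S (n + 1) = if ∀ m < n + 1, S (n + 1) ≤ S m
      then insert (n + 1) (recordMinTimes S n) else recordMinTimes S n := by
  rw [recordMinTimes, ← insert_Icc_right_eq_Icc_add_one (by omega), filter_insert]
  rfl

theorem sub_card_recordMinTimes_nsmul_le [AddCommGroup α] [IsOrderedAddMonoid α] {S : ℕ → α}
    {L : α} (hL : 0 ≤ L) {n : ℕ} (hstep : ∀ k < n, S k - L ≤ S (k + 1)) :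
    S 0 - #(recordMinTimes S n) • L ≤ S n := by
  induction n using Nat.strong_induction_on with
  | _ n ih =>
    match n with
    | 0 => simp [recordMinTimes]
    | k + 1 =>
      rw [recordMinTimes_succ]
      split_ifs with hrec
      · have hk := ih k (by omega) fun i hi => hstep i (by omega)
        rw [card_insert_of_notMem (by simp [recordMinTimes]), succ_nsmul]
        calc S 0 - (#(recordMinTimes S k) • L + L) = S 0 - #(recordMinTimes S k) • L - L := by
              abel
          _ ≤ S k - L := by gcongr
          _ ≤ S (k + 1) := hstep k (by omega)
      · push Not at hrec
        obtain ⟨m, hm, hlt⟩ := hrec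
        have hcard : #(recordMinTimes S m) • L ≤ #(recordMinTimes S k) • L :=
          nsmul_le_nsmul_left hL (card_le_card (recordMinTimes_mono S (by omega)))
        calc S 0 - #(recordMinTimes S k) • L ≤ S 0 - #(recordMinTimes S m) • L := by gcongr
          _ ≤ S m := ih m hm fun i hi => hstep i (by omega)
          _ ≤ S (k + 1) := hlt.le

end RecordMinima

theorem sum_Icc_add_one_eq_sub {M : Type*} [AddCommGroup M] (a : ℕ → M) {m k : ℕ} (h : m ≤ k) :
    ∑ i ∈ Icc (m + 1) k, a i = ∑ i ∈ Icc 1 k, a i - ∑ i ∈ Icc 1 m, a i := by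
  rw [eq_sub_iff_add_eq', Icc_add_one_left_eq_Ioc, ← zero_add 1, Icc_add_one_left_eq_Ioc,
    Icc_add_one_left_eq_Ioc]
  exact sum_Ioc_consecutive a (Nat.zero_le m) h

theorem sum_Icc_add_one_le_iff (a : ℕ → ℝ) (c : ℝ) {m k : ℕ} (h : m ≤ k) :
    ∑ i ∈ Icc (m + 1) k, a i ≤ c * ↑(k - m) ↔
      ∑ i ∈ Icc 1 k, a i - c * k ≤ ∑ i ∈ Icc 1 m, a i - c * m := by
  rw [sum_Icc_add_one_eq_sub a h, Nat.cast_sub h]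
  constructor <;> intro <;> linarith

theorem forall_window_sum_le_iff (a : ℕ → ℝ) (c : ℝ) (k : ℕ) :
    (∀ j, 1 ≤ j → j ≤ k → ∑ i ∈ Icc (k - j + 1) k, a i ≤ c * j) ↔
      ∀ m < k, ∑ i ∈ Icc 1 k, a i - c * k ≤ ∑ i ∈ Icc 1 m, a i - c * m := by
  constructor
  · intro h m hm
    have := h (k - m) (by omega) (by omega)
    rwa [Nat.sub_sub_self hm.le, sum_Icc_add_one_le_iff a c hm.le] at this
  · intro h j hj hjk
    have := (sum_Icc_add_one_le_iff a c (Nat.sub_le k j)).2 (h (k - j) (by omega))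
    rwa [Nat.sub_sub_self hjk] at this

open scoped Classical in
theorem pliss_hyperbolic_times_general (A α : ℝ) (hα : α < 0) (hAα : -A < α) :
    ∃ θ : ℝ, θ ∈ Set.Ioo (0 : ℝ) 1 ∧
      ∀ n : ℕ, 0 < n → ∀ a : ℕ → ℝ,
        (∀ i, 1 ≤ i → i ≤ n → -A ≤ a i) →
        (∑ i ∈ Finset.Icc 1 n, a i) < α * n →
        θ * n ≤
          ((Finset.Icc 1 n).filter (fun k =>
            ∀ j, 1 ≤ j → j ≤ k →
              (∑ i ∈ Finset.Icc (k - j + 1) k, a i) ≤ (α / 2) * j)).card := by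
  have hL : 0 < A + α / 2 := by linarith
  refine ⟨-α / 2 / (A + α / 2), ⟨div_pos (by linarith) hL, (div_lt_one hL).2 (by linarith)⟩, ?_⟩
  intro n _ a ha hsum
  set S : ℕ → ℝ := fun k => ∑ i ∈ Icc 1 k, a i - α / 2 * k
  have hstep : ∀ k < n, S k - (A + α / 2) ≤ S (k + 1) := by
    intro k hk
    have := ha (k + 1) (by omega) (by omega)
    simp only [S, sum_Icc_succ_top (by omega : 1 ≤ k + 1), Nat.cast_succ]
    linarith
  have hcount := sub_card_recordMinTimes_nsmul_le hL.le hstep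
  have hS0 : S 0 = 0 := by simp [S]
  rw [hS0, nsmul_eq_mul] at hcount
  simp only [S] at hcount
  suffices h : -α / 2 / (A + α / 2) * n ≤ #(recordMinTimes S n) by
    convert h using 3
    ext k
    simp only [mem_filter, recordMinTimes, forall_window_sum_le_iff, S]
  rw [div_mul_eq_mul_div, div_le_iff₀ hL]
  linarith

open scoped Classical in
theorem pliss_hyperbolic_times (A α : ℝ) (hA : 0 < A) (hα : α < 0) (hAα : -A < α) :
    ∃ θ : ℝ, θ ∈ Set.Ioo (0 : ℝ) 1 ∧
      ∀ n : ℕ, 0 < n → ∀ a : ℕ → ℝ,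
        (∀ i, 1 ≤ i → i ≤ n → -A ≤ a i) →
        (∑ i ∈ Finset.Icc 1 n, a i) < α * n →
        θ * n ≤
          ((Finset.Icc 1 n).filter (fun k =>
            ∀ j, 1 ≤ j → j ≤ k →
              (∑ i ∈ Finset.Icc (k - j + 1) k, a i) ≤ (α / 2) * j)).card :=
  pliss_hyperbolic_times_general A α hα hAα
end

section
/- Let M be a compact metric space, f : M → M continuous, N a positive integer, and μ̂ a Borel probability measure on M. Set ν = (1/N)∑_{ℓ=0}^{N−1} (f^ℓ)_* μ̂. Then B(μ̂, f^N) ⊆ B(ν, f); that is, every point x ∈ M such that (1/n)∑_{j=0}^{n−1} φ(f^{jN}(x)) → ∫ φ dμ̂ for every continuous φ : M → ℝ also satisfies (1/n)∑_{i=0}^{n−1} φ(f^i(x)) → ∫ φ dν for every continuous φ : M → ℝ. -/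
/-!
Splitting the orbit of `x` into residue classes modulo `N`, the Birkhoff sum of `φ` for `f` over
`N * n` steps is the sum over `ℓ < N` of the Birkhoff sums of `φ ∘ f^[ℓ]` for `f^[N]` over `n`
steps. Hence the Birkhoff averages for `f` converge along multiples of `N` to
`N⁻¹ * ∑ ℓ < N, ∫ φ ∘ f^[ℓ] dμhat = ∫ φ dν`, and since `φ` is bounded, the fewer than `N` terms
left over at a general time `n` do not affect the limit.
-/

open MeasureTheory Filter Topology Finset
open scoped ENNReal

section Birkhoff

variable {α : Type*}

theorem birkhoffSum_mul_eq_sum_birkhoffSum_iterate {M : Type*} [AddCommMonoid M]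
    (f : α → α) (g : α → M) (N n : ℕ) (x : α) :
    birkhoffSum f g (N * n) x = ∑ ℓ ∈ range N, birkhoffSum f^[N] (g ∘ f^[ℓ]) n x := by
  induction n with
  | zero => simp [birkhoffSum_zero]
  | succ n ih =>
    simp only [Nat.mul_succ, birkhoffSum_add, ih, birkhoffSum_succ, sum_add_distrib]
    congr 1
    refine sum_congr rfl fun ℓ _ => ?_
    rw [Function.comp_apply, ← Function.iterate_mul, ← Function.iterate_add_apply, add_comm]

theorem birkhoffAverage_mul_eq_average_birkhoffAverage_iterate (R : Type*) {M : Type*}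
    [Field R] [AddCommMonoid M] [Module R M] (f : α → α) (g : α → M) (N n : ℕ) (x : α) :
    birkhoffAverage R f g (N * n) x =
      (N : R)⁻¹ • ∑ ℓ ∈ range N, birkhoffAverage R f^[N] (g ∘ f^[ℓ]) n x := by
  simp only [birkhoffAverage, birkhoffSum_mul_eq_sum_birkhoffSum_iterate, ← smul_sum, smul_smul,
    Nat.cast_mul, mul_inv]

theorem norm_birkhoffSum_le {E : Type*} [NormedAddCommGroup E] {f : α → α} {g : α → E} {C : ℝ}
    (hg : ∀ y, ‖g y‖ ≤ C) (n : ℕ) (x : α) : ‖birkhoffSum f g n x‖ ≤ n * C :=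
  (norm_sum_le _ _).trans <| by simpa using sum_le_card_nsmul (range n) _ C fun k _ => hg _

theorem tendsto_mul_div_div_atTop_nhds_one {N : ℕ} (hN : N ≠ 0) :
    Tendsto (fun n : ℕ => ((N * (n / N) : ℕ) : ℝ) / n) atTop (𝓝 1) := by
  have hmod : Tendsto (fun n : ℕ => ((n % N : ℕ) : ℝ) / n) atTop (𝓝 0) :=
    squeeze_zero (fun n : ℕ => by positivity)
      (fun n => show ((n % N : ℕ) : ℝ) / n ≤ N / n by
        gcongr; exact_mod_cast (Nat.mod_lt n hN.bot_lt).le)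
      (tendsto_const_div_atTop_nhds_zero_nat (N : ℝ))
  refine (by simpa using tendsto_const_nhds.sub hmod : Tendsto _ _ (𝓝 (1 : ℝ))).congr' ?_
  filter_upwards [eventually_ne_atTop 0] with n hn
  have hcast : ((N * (n / N) : ℕ) : ℝ) + (n % N : ℕ) = n := by
    exact_mod_cast Nat.div_add_mod n N
  field_simp
  linarith

theorem tendsto_birkhoffAverage_of_tendsto_birkhoffAverage_mul {E : Type*} [NormedAddCommGroup E]
    [NormedSpace ℝ E] {f : α → α} {g : α → E} {C : ℝ} (hg : ∀ y, ‖g y‖ ≤ C) {N : ℕ}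
    (hN : N ≠ 0) {x : α} {L : E}
    (h : Tendsto (fun n => birkhoffAverage ℝ f g (N * n) x) atTop (𝓝 L)) :
    Tendsto (birkhoffAverage ℝ f g · x) atTop (𝓝 L) := by
  set m : ℕ → ℕ := fun n => N * (n / N)
  have hsplit (n : ℕ) : birkhoffAverage ℝ f g n x =
      ((m n : ℝ) / n) • birkhoffAverage ℝ f g (m n) x
        + (n : ℝ)⁻¹ • birkhoffSum f g (n % N) (f^[m n] x) := by
    have hsum : birkhoffSum f g n x =
        birkhoffSum f g (m n) x + birkhoffSum f g (n % N) (f^[m n] x) := by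
      rw [← birkhoffSum_add, Nat.div_add_mod]
    rw [birkhoffAverage, hsum, smul_add, birkhoffAverage, smul_smul]
    rcases eq_or_ne (m n) 0 with hm | hm
    · simp [hm, birkhoffSum_zero]
    · field_simp
  have hrem : Tendsto (fun n : ℕ => (n : ℝ)⁻¹ • birkhoffSum f g (n % N) (f^[m n] x))
      atTop (𝓝 0) := by
    have hC : 0 ≤ C := (norm_nonneg _).trans (hg x)
    refine (tendsto_inv_atTop_nhds_zero_nat (𝕜 := ℝ)).zero_smul_isBoundedUnder_le
      ⟨N * C, eventually_map.mpr <| Eventually.of_forall fun n => ?_⟩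
    calc ‖birkhoffSum f g (n % N) (f^[m n] x)‖ ≤ (n % N : ℕ) * C := norm_birkhoffSum_le hg _ _
      _ ≤ N * C := by gcongr; exact_mod_cast (Nat.mod_lt n hN.bot_lt).le
  have hlim := ((tendsto_mul_div_div_atTop_nhds_one hN).smul
    (h.comp (Nat.tendsto_div_const_atTop hN))).add hrem
  rw [one_smul, add_zero] at hlim
  exact hlim.congr fun n => (hsplit n).symm

end Birkhoff

theorem integral_finsetSum_map {ι X Y : Type*} [MeasurableSpace X] [TopologicalSpace Y]
    [CompactSpace Y] [MeasurableSpace Y] [OpensMeasurableSpace Y] (μ : Measure X)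
    [IsFiniteMeasure μ] (s : Finset ι) {F : ι → X → Y} (hF : ∀ i, AEMeasurable (F i) μ)
    (φ : C(Y, ℝ)) :
    ∫ y, φ y ∂(∑ i ∈ s, μ.map (F i)) = ∑ i ∈ s, ∫ x, φ (F i x) ∂μ := by
  rw [integral_finsetSum_measure (f := φ) fun i _ =>
    (BoundedContinuousFunction.mkOfCompact φ).integrable _]
  exact sum_congr rfl fun i _ => integral_map (hF i) φ.continuous.aestronglyMeasurable

theorem basin_of_power_subset_basin
    {M : Type*} [MetricSpace M] [CompactSpace M] [MeasurableSpace M] [BorelSpace M]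
    (f : M → M) (hf : Continuous f) (N : ℕ) (hN : 0 < N)
    (μhat : Measure M) [IsProbabilityMeasure μhat]
    (ν : Measure M)
    (hν : ν = (N : ℝ≥0∞)⁻¹ • ∑ ℓ ∈ Finset.range N, Measure.map (f^[ℓ]) μhat)
    (x : M)
    (hx : ∀ φ : C(M, ℝ),
      Tendsto (fun n : ℕ => (n : ℝ)⁻¹ * ∑ j ∈ Finset.range n, φ ((f^[N])^[j] x))
        atTop (𝓝 (∫ z, φ z ∂μhat))) :
    ∀ φ : C(M, ℝ),
      Tendsto (fun n : ℕ => (n : ℝ)⁻¹ * ∑ i ∈ Finset.range n, φ (f^[i] x))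
        atTop (𝓝 (∫ z, φ z ∂ν)) := by
  intro φ
  refine tendsto_birkhoffAverage_of_tendsto_birkhoffAverage_mul φ.norm_coe_le_norm hN.ne' ?_
  rw [hν, integral_smul_measure,
    integral_finsetSum_map _ _ fun ℓ => (hf.iterate ℓ).measurable.aemeasurable,
    ENNReal.toReal_inv, ENNReal.toReal_natCast]
  simp_rw [birkhoffAverage_mul_eq_average_birkhoffAverage_iterate]
  exact (tendsto_finsetSum _ fun ℓ _ => hx (φ.comp ⟨f^[ℓ], hf.iterate ℓ⟩)).const_smul _
end

section
/- Let M be a compact metric space, f : M → M continuous, φ : M → ℝ continuous, and α < 0. Then there exist σ < 0 and β ∈ (0,1) such that for every x ∈ M the following holds: if there exist a Borel probability measure μ that is a weak* cluster point of the empirical measures ((1/n)∑_{i=0}^{n−1} δ_{f^i(x)})_{n≥1} with ∫ φ dμ < α, and an open set U ⊆ M with μ(U) > β, then limsup_{n→∞} (1/n)·#{ k ∈ {1, …, n} : f^k(x) ∈ U and ∑_{i=k−j+1}^{k} φ(f^i(x)) ≤ σ·j for every 1 ≤ j ≤ k } > 0. -/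
/-!
Put `S m = ∑_{i=1}^m (φ (f^i x) - σ)`. A time `k` is σ-hyperbolic iff `S k ≤ S m` for all
`m < k`, i.e. a new running minimum of `S`; as `S` drops by at most `B = ‖φ‖ - σ` per step,
there are at least `-S N / B` hyperbolic times in `[1, N]` (Pliss' lemma). Along the sequence
`n k` realising `μ` the Birkhoff averages of `φ` tend to `∫ φ dμ < α`, so with `σ = α/2` the
hyperbolic times have density at least `θ = -α / (4B)` at the times `n k`. A Urysohn function
below the indicator of `U` with integral `> β = 1 - θ/2` shows that the visits to `U` have
density `> β` there, so both sets overlap in density at least `θ/2`.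
-/

open MeasureTheory Filter Topology Finset

def IsHyperbolicTime (a : ℕ → ℝ) (σ : ℝ) (k : ℕ) : Prop :=
  ∀ j, 1 ≤ j → j ≤ k → ∑ i ∈ Icc (k - j + 1) k, a i ≤ σ * j

theorem sub_le_mul_card_filter_forall_lt_le {S : ℕ → ℝ} {B : ℝ} (hB : 0 ≤ B)
    (hS : ∀ k, S k - B ≤ S (k + 1)) (N : ℕ) :
    ∀ m ≤ N, S 0 - S m ≤ B * #{k ∈ Ioc 0 N | ∀ j < k, S k ≤ S j} := by
  induction N with
  | zero => intro m hm; simp [Nat.le_zero.mp hm]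
  | succ N ih =>
    have hcard : (#{k ∈ Ioc 0 (N + 1) | ∀ j < k, S k ≤ S j} : ℝ)
        = #{k ∈ Ioc 0 N | ∀ j < k, S k ≤ S j}
          + if ∀ j < N + 1, S (N + 1) ≤ S j then 1 else 0 := by
      simp only [natCast_card_filter, sum_Ioc_succ_top (Nat.zero_le N)]
    have hmono : (#{k ∈ Ioc 0 N | ∀ j < k, S k ≤ S j} : ℝ)
        ≤ #{k ∈ Ioc 0 (N + 1) | ∀ j < k, S k ≤ S j} := by
      rw [hcard]; split_ifs <;> linarith
    intro m hm
    rcases hm.lt_or_eq with hm | rfl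
    · exact (ih m (Nat.lt_succ_iff.mp hm)).trans (mul_le_mul_of_nonneg_left hmono hB)
    · by_cases hrec : ∀ j < N + 1, S (N + 1) ≤ S j
      · rw [hcard, if_pos hrec]
        linarith [ih N le_rfl, hS N]
      · push Not at hrec
        obtain ⟨m, hm, hlt⟩ := hrec
        linarith [ih m (Nat.lt_succ_iff.mp hm), mul_le_mul_of_nonneg_left hmono hB]

theorem isHyperbolicTime_iff_forall_lt_le (a : ℕ → ℝ) (σ : ℝ) (k : ℕ) :
    IsHyperbolicTime a σ k ↔
      ∀ m < k, ∑ i ∈ Ioc 0 k, (a i - σ) ≤ ∑ i ∈ Ioc 0 m, (a i - σ) := by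
  have tail : ∀ m ≤ k, ∑ i ∈ Ioc 0 k, (a i - σ)
      = ∑ i ∈ Ioc 0 m, (a i - σ) + (∑ i ∈ Icc (m + 1) k, a i - σ * (k - m : ℕ)) := by
    intro m hm
    rw [← sum_Ioc_consecutive _ (Nat.zero_le m) hm, Icc_add_one_left_eq_Ioc]
    simp only [sum_sub_distrib, sum_const, Nat.card_Ioc, nsmul_eq_mul]
    ring
  constructor
  · intro h m hm
    have := h (k - m) (by omega) (Nat.sub_le k m)
    rw [Nat.sub_sub_self hm.le] at this
    linarith [tail m hm.le]
  · intro h j hj hjk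
    have := tail (k - j) (Nat.sub_le k j)
    rw [Nat.sub_sub_self hjk] at this
    linarith [h (k - j) (by omega)]

theorem sub_sum_le_mul_card_isHyperbolicTime {a : ℕ → ℝ} {σ B : ℝ} (hB : 0 ≤ B)
    (ha : ∀ i, σ - B ≤ a i) (N : ℕ) [DecidablePred (IsHyperbolicTime a σ)] :
    σ * N - ∑ i ∈ Icc 1 N, a i ≤ B * #{k ∈ Icc 1 N | IsHyperbolicTime a σ k} := by
  have hIcc : Icc 1 N = Ioc 0 N := Icc_add_one_left_eq_Ioc 0 N
  have hS (k : ℕ) : ∑ i ∈ Ioc 0 k, (a i - σ) - B ≤ ∑ i ∈ Ioc 0 (k + 1), (a i - σ) := by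
    rw [sum_Ioc_succ_top (Nat.zero_le k)]
    linarith [ha (k + 1)]
  have := sub_le_mul_card_filter_forall_lt_le hB hS N N le_rfl
  rw [hIcc, filter_congr fun k _ => isHyperbolicTime_iff_forall_lt_le a σ k]
  rw [sum_sub_distrib, sum_const, Nat.card_Ioc, nsmul_eq_mul] at this
  simpa [mul_comm] using this

theorem sum_Icc_one_sub_sum_range (u : ℕ → ℝ) (N : ℕ) :
    ∑ i ∈ Icc 1 N, u i - ∑ i ∈ range N, u i = u N - u 0 := by
  induction N with
  | zero => simp
  | succ N ih =>
    rw [sum_Icc_succ_top (by omega), sum_range_succ]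
    linarith

theorem Filter.Tendsto.inv_mul_sum_Icc_one {ι : Type*} {l : Filter ι} {u : ℕ → ℝ} {C : ℝ}
    (hu : ∀ i, |u i| ≤ C) {n : ι → ℕ} {L : ℝ}
    (h : Tendsto (fun k => (n k : ℝ)⁻¹ * ∑ i ∈ range (n k), u i) l (𝓝 L))
    (hn : Tendsto n l atTop) :
    Tendsto (fun k => (n k : ℝ)⁻¹ * ∑ i ∈ Icc 1 (n k), u i) l (𝓝 L) := by
  have hdiff : Tendsto (fun N : ℕ => (N : ℝ)⁻¹ * (u N - u 0)) atTop (𝓝 0) :=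
    tendsto_inv_atTop_nhds_zero_nat.zero_mul_isBoundedUnder_le
      ⟨2 * C, eventually_map.mpr (Eventually.of_forall fun N => by
        simp only [Function.comp_apply, Real.norm_eq_abs]
        linarith [abs_sub (u N) (u 0), hu N, hu 0])⟩
  simpa [← sum_Icc_one_sub_sum_range, mul_sub] using h.add (hdiff.comp hn)

theorem eventually_mul_lt_of_tendsto_inv_mul {ι : Type*} {l : Filter ι} {n : ι → ℕ}
    (hn : Tendsto n l atTop) {s : ι → ℝ} {L c : ℝ}
    (h : Tendsto (fun k => (n k : ℝ)⁻¹ * s k) l (𝓝 L)) (hc : c < L) :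
    ∀ᶠ k in l, c * n k < s k := by
  filter_upwards [h.eventually_const_lt hc, hn.eventually_gt_atTop 0] with k hk hpos
  rw [mul_comm]
  exact (lt_inv_mul_iff₀ (by exact_mod_cast hpos)).mp hk

theorem eventually_lt_mul_of_tendsto_inv_mul {ι : Type*} {l : Filter ι} {n : ι → ℕ}
    (hn : Tendsto n l atTop) {s : ι → ℝ} {L c : ℝ}
    (h : Tendsto (fun k => (n k : ℝ)⁻¹ * s k) l (𝓝 L)) (hc : L < c) :
    ∀ᶠ k in l, s k < c * n k := by
  filter_upwards [h.eventually_lt_const hc, hn.eventually_gt_atTop 0] with k hk hpos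
  rw [mul_comm]
  exact (inv_mul_lt_iff₀ (by exact_mod_cast hpos)).mp hk

theorem exists_continuousMap_le_indicator_lt_integral {X : Type*} [PseudoMetricSpace X]
    [MeasurableSpace X] [BorelSpace X] (μ : Measure X) [IsFiniteMeasure μ] {U : Set X}
    (hU : IsOpen U) {β : ℝ} (hβ : ENNReal.ofReal β < μ U) :
    ∃ g : C(X, ℝ), ⇑g ≤ U.indicator 1 ∧ β < ∫ z, g z ∂μ := by
  obtain ⟨F, hFU, hF, hβF⟩ := hU.exists_lt_isClosed hβ
  obtain ⟨g, hg0, hg1, hg01⟩ := exists_continuous_zero_one_of_isClosed hU.isClosed_compl hF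
    (Set.disjoint_compl_left_iff_subset.mpr hFU)
  refine ⟨g, fun z => ?_, ?_⟩
  · by_cases hz : z ∈ U
    · simpa [hz] using (hg01 z).2
    · simpa [hz] using (hg0 hz).le
  · have hFg : F.indicator 1 ≤ ⇑g := fun z => by
      by_cases hz : z ∈ F
      · simp [hz, hg1 hz]
      · simpa [hz] using (hg01 z).1
    calc β ≤ (ENNReal.ofReal β).toReal := ENNReal.toReal_ofReal' ▸ le_max_left β 0
      _ < μ.real F :=
        (ENNReal.toReal_lt_toReal ENNReal.ofReal_ne_top (measure_ne_top μ F)).mpr hβF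
      _ = ∫ z, F.indicator 1 z ∂μ := (integral_indicator_one hF.measurableSet).symm
      _ ≤ ∫ z, g z ∂μ := integral_mono ((integrable_const 1).indicator hF.measurableSet)
          ((integrable_const 1).mono' g.continuous.aestronglyMeasurable
            (ae_of_all μ fun z => abs_le.mpr ⟨by linarith [(hg01 z).1], (hg01 z).2⟩)) hFg

theorem sum_le_card_filter_of_le_indicator {X ι : Type*} {g : X → ℝ} {U : Set X}
    (hg : g ≤ U.indicator 1) (y : ι → X) (s : Finset ι) [DecidablePred (y · ∈ U)] :
    ∑ i ∈ s, g (y i) ≤ #{i ∈ s | y i ∈ U} := by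
  rw [natCast_card_filter]
  exact sum_le_sum fun i _ => (hg (y i)).trans_eq (by simp [Set.indicator_apply])

theorem card_filter_add_card_filter_le {α : Type*} (s : Finset α) (p q : α → Prop)
    [DecidablePred p] [DecidablePred q] :
    #{a ∈ s | p a} + #{a ∈ s | q a} ≤ #s + #{a ∈ s | p a ∧ q a} := by
  classical
  rw [filter_and, ← card_union_add_card_inter]
  exact Nat.add_le_add_right (card_le_card (union_subset (filter_subset _ _) (filter_subset _ _))) _

theorem le_limsup_inv_mul_card_filter_and {p q : ℕ → Prop} [DecidablePred p] [DecidablePred q]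
    {ι : Type*} {l : Filter ι} [l.NeBot] {n : ι → ℕ} (hn : Tendsto n l atTop) {a b : ℝ}
    (hp : ∀ᶠ k in l, a * n k ≤ #{i ∈ Icc 1 (n k) | p i})
    (hq : ∀ᶠ k in l, b * n k ≤ #{i ∈ Icc 1 (n k) | q i}) :
    a + b - 1 ≤ atTop.limsup fun N : ℕ => (N : ℝ)⁻¹ * #{i ∈ Icc 1 N | p i ∧ q i} := by
  have hbound : ∀ N : ℕ, (N : ℝ)⁻¹ * #{i ∈ Icc 1 N | p i ∧ q i} ≤ 1 := fun N =>
    inv_mul_le_one_of_le₀ (by simpa using card_filter_le (Icc 1 N) _) N.cast_nonneg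
  refine le_limsup_of_frequently_le (hn.frequently (Eventually.frequently ?_))
    (isBoundedUnder_of ⟨1, hbound⟩)
  filter_upwards [hp, hq, hn.eventually_gt_atTop 0] with k hpk hqk hk
  have hcount : (#{i ∈ Icc 1 (n k) | p i} : ℝ) + #{i ∈ Icc 1 (n k) | q i}
      ≤ n k + #{i ∈ Icc 1 (n k) | p i ∧ q i} := by
    exact_mod_cast (Nat.card_Icc 1 (n k) ▸ card_filter_add_card_filter_le (Icc 1 (n k)) p q)
  rw [le_inv_mul_iff₀ (by exact_mod_cast hk)]
  linarith

open scoped Classical in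
theorem hyperbolic_entrance_times_positive_frequency_general
    {M : Type*} [MetricSpace M] [CompactSpace M] [MeasurableSpace M] [BorelSpace M]
    (f : M → M) (φ : M → ℝ) (hφ : Continuous φ)
    (α : ℝ) (hα : α < 0) :
    ∃ σ : ℝ, σ < 0 ∧ ∃ β : ℝ, β ∈ Set.Ioo (0 : ℝ) 1 ∧
      ∀ x : M, ∀ μ : Measure M, IsProbabilityMeasure μ →
        (∃ n : ℕ → ℕ, StrictMono n ∧
          ∀ g : C(M, ℝ),
            Tendsto (fun k => ((n k : ℝ))⁻¹ * ∑ i ∈ Finset.range (n k), g (f^[i] x))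
              atTop (𝓝 (∫ z, g z ∂μ))) →
        (∫ z, φ z ∂μ) < α →
        ∀ U : Set M, IsOpen U → ENNReal.ofReal β < μ U →
        0 < atTop.limsup (fun n : ℕ =>
          (n : ℝ)⁻¹ * ((Finset.Icc 1 n).filter (fun k =>
            f^[k] x ∈ U ∧ ∀ j, 1 ≤ j → j ≤ k →
              (∑ i ∈ Finset.Icc (k - j + 1) k, φ (f^[i] x)) ≤ σ * j)).card) := by
  set Φ : C(M, ℝ) := ⟨φ, hφ⟩
  have hΦ : ∀ z, |φ z| ≤ ‖Φ‖ := Φ.norm_coe_le_norm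
  have hB : 0 < ‖Φ‖ - α / 2 := by linarith [norm_nonneg Φ]
  set θ := -α / 4 / (‖Φ‖ - α / 2)
  have hθ : 0 < θ := div_pos (by linarith) hB
  have hθ2 : θ < 2 := (div_lt_iff₀ hB).mpr (by linarith [norm_nonneg Φ])
  refine ⟨α / 2, by linarith, 1 - θ / 2, ⟨by linarith, by linarith⟩, ?_⟩
  rintro x μ hμ ⟨n, hn, hconv⟩ hint U hU hμU
  have hconv' (g : C(M, ℝ)) := (hconv g).inv_mul_sum_Icc_one
    (fun i => g.norm_coe_le_norm (f^[i] x)) hn.tendsto_atTop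
  obtain ⟨g, hgU, hgβ⟩ := exists_continuousMap_le_indicator_lt_integral μ hU hμU
  have hvisits : ∀ᶠ k in atTop, (1 - θ / 2) * n k ≤ #{i ∈ Icc 1 (n k) | f^[i] x ∈ U} :=
    (eventually_mul_lt_of_tendsto_inv_mul hn.tendsto_atTop (hconv' g) hgβ).mono fun k hk =>
      hk.le.trans (sum_le_card_filter_of_le_indicator hgU _ _)
  have hhyp : ∀ᶠ k in atTop,
      θ * n k ≤ #{i ∈ Icc 1 (n k) | IsHyperbolicTime (fun i => φ (f^[i] x)) (α / 2) i} := by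
    filter_upwards [eventually_lt_mul_of_tendsto_inv_mul hn.tendsto_atTop (hconv' Φ)
      (hint.trans (by linarith : α < 3 * α / 4))] with k hk
    have hpliss := sub_sum_le_mul_card_isHyperbolicTime (a := fun i => φ (f^[i] x))
      (σ := α / 2) hB.le (fun i => by linarith [abs_le.mp (hΦ (f^[i] x))]) (n k)
    rw [div_mul_eq_mul_div, div_le_iff₀ hB]
    simp only [Φ, ContinuousMap.coe_mk] at hk
    linarith
  calc 0 < 1 - θ / 2 + θ - 1 := by linarith
    _ ≤ _ := by
      -- the statement decides hyperbolicity by `Nat.decidableLoHiLe`, `hhyp` classically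
      convert le_limsup_inv_mul_card_filter_and hn.tendsto_atTop hvisits hhyp
      exact Iff.rfl

open scoped Classical in
theorem hyperbolic_entrance_times_positive_frequency
    {M : Type*} [MetricSpace M] [CompactSpace M] [MeasurableSpace M] [BorelSpace M]
    (f : M → M) (hf : Continuous f) (φ : M → ℝ) (hφ : Continuous φ)
    (α : ℝ) (hα : α < 0) :
    ∃ σ : ℝ, σ < 0 ∧ ∃ β : ℝ, β ∈ Set.Ioo (0 : ℝ) 1 ∧
      ∀ x : M, ∀ μ : Measure M, IsProbabilityMeasure μ →
        (∃ n : ℕ → ℕ, StrictMono n ∧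
          ∀ g : C(M, ℝ),
            Tendsto (fun k => ((n k : ℝ))⁻¹ * ∑ i ∈ Finset.range (n k), g (f^[i] x))
              atTop (𝓝 (∫ z, g z ∂μ))) →
        (∫ z, φ z ∂μ) < α →
        ∀ U : Set M, IsOpen U → ENNReal.ofReal β < μ U →
        0 < atTop.limsup (fun n : ℕ =>
          (n : ℝ)⁻¹ * ((Finset.Icc 1 n).filter (fun k =>
            f^[k] x ∈ U ∧ ∀ j, 1 ≤ j → j ≤ k →
              (∑ i ∈ Finset.Icc (k - j + 1) k, φ (f^[i] x)) ≤ σ * j)).card) :=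
  hyperbolic_entrance_times_positive_frequency_general f φ hφ α hα
end
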